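/- Let σ(x) = 1/(1+e^{−x}), and for s ≥ 1 define ψ^s : ℝ → ℝ by ψ^s(x) = σ(s(x + 3/2)) − σ(s(x − 3/2)); for N ∈ ℕ, d ∈ ℕ and m ∈ {0,…,N}^d define φ^s_m : ℝ^d → ℝ by φ^s_m(x) = ∏_{l=1}^d ψ^s(3N(x_l − m_l/N)). Then for every d ∈ ℕ and k ∈ ℕ₀ there exists a constant C = C(k, d) > 0 such that for all N ∈ ℕ, all s ≥ 1, all m ∈ {0,…,N}^d, every multi-index α with |α| ≤ k and every x ∈ ℝ^d with ‖x − m/N‖_∞ ≥ 1/N, |D^α φ^s_m(x)| ≤ C·N^k·s^k·e^{−s}. (Exponential decay of the bump functions outside their patch.) -/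

import Mathlib

/-- Iterated partial derivative `D^α` in the directions listed in `u` (a multi-index `α`
with `|α| = u.length`). -/
noncomputable def multiDeriv {d : ℕ} : List (Fin d) → ((Fin d → ℝ) → ℝ) → ((Fin d → ℝ) → ℝ)
  | [], f => f
  | i :: u, f => fun x => fderiv ℝ (multiDeriv u f) x (Pi.single i 1)

/-- The sigmoid (logistic) function. -/
noncomputable def sigmoid (x : ℝ) : ℝ := 1 / (1 + Real.exp (-x))

/-- The one-dimensional approximate bump `ψ^s(x) = σ(s(x+3/2)) - σ(s(x-3/2))`. -/
noncomputable def psiSig (s x : ℝ) : ℝ :=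
  sigmoid (s * (x + 3 / 2)) - sigmoid (s * (x - 3 / 2))

/-- The multi-dimensional bump `φ^s_m(x) = ∏_l ψ^s(3N(x_l - m_l/N))`. -/
noncomputable def bump (d N : ℕ) (s : ℝ) (m : Fin d → ℕ) (x : Fin d → ℝ) : ℝ :=
  ∏ l : Fin d, psiSig s (3 * (N : ℝ) * (x l - (m l : ℝ) / (N : ℝ)))

/-! Every derivative of `σ` is a polynomial in `σ`, and from the first one on it carries the
factor `σ (1 - σ) ≤ exp (-|y|)`. So the `n`-th derivative of `ψ^s` is `s ^ n` times a bounded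
difference of two derivatives of `σ` at `s (x ± 3/2)`; when `|x| ≥ 3` both points lie on the same
side of `0` at distance at least `s`, and the difference is `O(e^{-s})` (for `n = 0` because `σ`
is `e^{-s}`-close to the same constant `0` or `1` at both points). The partial derivative `D^α`
of the product `φ^s_m` is the product of the one-dimensional derivatives, each `O((3Ns)^{α_l})`,
and the coordinate with `|x_i - m_i/N| ≥ 1/N` contributes the extra factor `e^{-s}`. -/

open Polynomial
open scoped ContDiff

theorem sigmoid_eq_real_sigmoid : sigmoid = Real.sigmoid := funext fun _ => one_div _

theorem Real.sigmoid_le_exp (x : ℝ) : Real.sigmoid x ≤ Real.exp x := by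
  have h := Real.sigmoid_mul_rexp_neg x ▸ Real.sigmoid_le_one (-x)
  rwa [Real.exp_neg, ← div_eq_mul_inv, div_le_one (Real.exp_pos x)] at h

theorem Real.sigmoid_mul_one_sub_le_exp_neg_abs (x : ℝ) :
    Real.sigmoid x * (1 - Real.sigmoid x) ≤ Real.exp (-|x|) := by
  rw [← Real.sigmoid_neg]
  have := Real.sigmoid_pos x
  have := Real.sigmoid_pos (-x)
  rcases le_total 0 x with hx | hx
  · rw [abs_of_nonneg hx]
    nlinarith [Real.sigmoid_le_one x, Real.sigmoid_le_exp (-x)]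
  · rw [abs_of_nonpos hx, neg_neg]
    nlinarith [Real.sigmoid_le_one (-x), Real.sigmoid_le_exp x]

theorem Real.exists_polynomial_iteratedDeriv_sigmoid (n : ℕ) :
    ∃ p : ℝ[X], iteratedDeriv n Real.sigmoid = fun y => p.eval (Real.sigmoid y) := by
  induction n with
  | zero => exact ⟨X, by simp⟩
  | succ n ih =>
    obtain ⟨p, hp⟩ := ih
    refine ⟨derivative p * (X * (1 - X)), funext fun y => ?_⟩
    rw [iteratedDeriv_succ, hp]
    simp only [eval_mul, eval_sub, eval_one, eval_X]
    exact ((p.hasDerivAt _).comp y (Real.hasDerivAt_sigmoid y)).deriv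

theorem Real.exists_abs_iteratedDeriv_sigmoid_le (n : ℕ) :
    ∃ C, ∀ y, |iteratedDeriv n Real.sigmoid y| ≤ C := by
  obtain ⟨p, hp⟩ := Real.exists_polynomial_iteratedDeriv_sigmoid n
  obtain ⟨C, hC⟩ := (isCompact_Icc (a := (0 : ℝ)) (b := 1)).exists_bound_of_continuousOn
    p.continuous.continuousOn
  exact ⟨C, fun y => hp ▸ hC _ ⟨Real.sigmoid_nonneg y, Real.sigmoid_le_one y⟩⟩

theorem Real.exists_abs_iteratedDeriv_succ_sigmoid_le (n : ℕ) :
    ∃ C, 0 ≤ C ∧ ∀ y, |iteratedDeriv (n + 1) Real.sigmoid y| ≤ C * Real.exp (-|y|) := by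
  obtain ⟨p, hp⟩ := Real.exists_polynomial_iteratedDeriv_sigmoid n
  obtain ⟨C, hC⟩ := (isCompact_Icc (a := (0 : ℝ)) (b := 1)).exists_bound_of_continuousOn
    (derivative p).continuous.continuousOn
  refine ⟨C, (norm_nonneg _).trans (hC 0 (by simp)), fun y => ?_⟩
  have hσ : Real.sigmoid y ∈ Set.Icc (0 : ℝ) 1 :=
    ⟨Real.sigmoid_nonneg y, Real.sigmoid_le_one y⟩
  have hσ' : 0 ≤ Real.sigmoid y * (1 - Real.sigmoid y) := mul_nonneg hσ.1 (sub_nonneg.2 hσ.2)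
  have hderiv : iteratedDeriv (n + 1) Real.sigmoid y =
      (derivative p).eval (Real.sigmoid y) * (Real.sigmoid y * (1 - Real.sigmoid y)) := by
    rw [iteratedDeriv_succ, hp]
    exact ((p.hasDerivAt _).comp y (Real.hasDerivAt_sigmoid y)).deriv
  rw [hderiv, abs_mul, abs_of_nonneg hσ']
  exact mul_le_mul (hC _ hσ) (Real.sigmoid_mul_one_sub_le_exp_neg_abs y) hσ'
    ((norm_nonneg _).trans (hC _ hσ))

theorem Real.abs_sigmoid_sub_sigmoid_le {s a b : ℝ}
    (h : s ≤ a ∧ s ≤ b ∨ a ≤ -s ∧ b ≤ -s) :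
    |Real.sigmoid a - Real.sigmoid b| ≤ Real.exp (-s) := by
  have key : ∀ {a b : ℝ}, a ≤ -s → b ≤ -s →
      |Real.sigmoid a - Real.sigmoid b| ≤ Real.exp (-s) :=
    fun ha hb => abs_sub_le_of_nonneg_of_le (Real.sigmoid_nonneg _)
      ((Real.sigmoid_le_exp _).trans (Real.exp_le_exp.2 ha)) (Real.sigmoid_nonneg _)
      ((Real.sigmoid_le_exp _).trans (Real.exp_le_exp.2 hb))
  rcases h with ⟨ha, hb⟩ | ⟨ha, hb⟩
  · calc |Real.sigmoid a - Real.sigmoid b| = |Real.sigmoid (-b) - Real.sigmoid (-a)| := by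
          rw [Real.sigmoid_neg, Real.sigmoid_neg, sub_sub_sub_cancel_left]
      _ ≤ Real.exp (-s) := key (neg_le_neg hb) (neg_le_neg ha)
  · exact key ha hb

theorem Real.exists_abs_iteratedDeriv_sigmoid_sub_le (n : ℕ) :
    ∃ C, ∀ s a b : ℝ, s ≤ a ∧ s ≤ b ∨ a ≤ -s ∧ b ≤ -s →
      |iteratedDeriv n Real.sigmoid a - iteratedDeriv n Real.sigmoid b| ≤ C * Real.exp (-s) := by
  cases n with
  | zero => exact ⟨1, fun s a b h => by simpa using Real.abs_sigmoid_sub_sigmoid_le h⟩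
  | succ n =>
    obtain ⟨C, hC0, hC⟩ := Real.exists_abs_iteratedDeriv_succ_sigmoid_le n
    refine ⟨2 * C, fun s a b h => ?_⟩
    have hs : s ≤ |a| ∧ s ≤ |b| := by
      rcases h with ⟨ha, hb⟩ | ⟨ha, hb⟩
      · exact ⟨ha.trans (le_abs_self a), hb.trans (le_abs_self b)⟩
      · exact ⟨(le_neg.1 ha).trans (neg_le_abs a), (le_neg.1 hb).trans (neg_le_abs b)⟩
    calc _ ≤ C * Real.exp (-|a|) + C * Real.exp (-|b|) :=
          (abs_sub _ _).trans (add_le_add (hC a) (hC b))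
      _ ≤ C * Real.exp (-s) + C * Real.exp (-s) := by gcongr <;> simp [hs.1, hs.2]
      _ = 2 * C * Real.exp (-s) := by ring

theorem iteratedDeriv_comp_mul_sub {𝕜 : Type*} [NontriviallyNormedField 𝕜] {f : 𝕜 → 𝕜}
    {n : ℕ} (hf : ContDiff 𝕜 n f) (c a : 𝕜) :
    iteratedDeriv n (fun x => f (c * (x - a))) =
      fun x => c ^ n * iteratedDeriv n f (c * (x - a)) := by
  rw [iteratedDeriv_comp_sub_const n (fun y => f (c * y)), iteratedDeriv_comp_const_mul hf]

theorem contDiff_psiSig (s : ℝ) : ContDiff ℝ ∞ (psiSig s) := by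
  unfold psiSig
  rw [sigmoid_eq_real_sigmoid]
  exact ((contDiff_sigmoid.comp (by fun_prop)).sub
    (contDiff_sigmoid.comp (by fun_prop))).of_le le_top

theorem iteratedDeriv_psiSig (s : ℝ) (n : ℕ) (x : ℝ) :
    iteratedDeriv n (psiSig s) x = s ^ n * (iteratedDeriv n Real.sigmoid (s * (x + 3 / 2)) -
      iteratedDeriv n Real.sigmoid (s * (x - 3 / 2))) := by
  have hσ : ContDiff ℝ n Real.sigmoid := contDiff_sigmoid.of_le le_top
  have hψ : psiSig s = (fun x => Real.sigmoid (s * (x - -(3 / 2)))) -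
      fun x => Real.sigmoid (s * (x - 3 / 2)) := by
    ext x; simp [psiSig, sigmoid_eq_real_sigmoid]
  rw [hψ, iteratedDeriv_sub (by fun_prop) (by fun_prop), iteratedDeriv_comp_mul_sub hσ,
    iteratedDeriv_comp_mul_sub hσ]
  simp only [sub_neg_eq_add, mul_sub]

theorem exists_abs_iteratedDeriv_psiSig_le (n : ℕ) :
    ∃ C, ∀ s, 0 ≤ s → ∀ x, |iteratedDeriv n (psiSig s) x| ≤ C * s ^ n := by
  obtain ⟨C, hC⟩ := Real.exists_abs_iteratedDeriv_sigmoid_le n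
  refine ⟨2 * C, fun s hs x => ?_⟩
  rw [iteratedDeriv_psiSig, abs_mul, abs_pow, abs_of_nonneg hs]
  calc s ^ n * |_| ≤ s ^ n * (C + C) := by
        gcongr; exact (abs_sub _ _).trans (add_le_add (hC _) (hC _))
    _ = 2 * C * s ^ n := by ring

theorem exists_abs_iteratedDeriv_psiSig_le_of_three_le_abs (n : ℕ) :
    ∃ C, ∀ s, 0 ≤ s → ∀ x, 3 ≤ |x| →
      |iteratedDeriv n (psiSig s) x| ≤ C * s ^ n * Real.exp (-s) := by
  obtain ⟨C, hC⟩ := Real.exists_abs_iteratedDeriv_sigmoid_sub_le n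
  refine ⟨C, fun s hs x hx => ?_⟩
  have hside : s ≤ s * (x + 3 / 2) ∧ s ≤ s * (x - 3 / 2) ∨
      s * (x + 3 / 2) ≤ -s ∧ s * (x - 3 / 2) ≤ -s := by
    rcases le_abs'.1 hx with hx | hx
    · right; constructor <;> nlinarith
    · left; constructor <;> nlinarith
  rw [iteratedDeriv_psiSig, abs_mul, abs_pow, abs_of_nonneg hs, mul_comm C, mul_assoc]
  gcongr
  exact hC s _ _ hside

theorem exists_uniform_abs_iteratedDeriv_psiSig_le (k : ℕ) :
    ∃ C, 0 < C ∧ ∀ n ≤ k, ∀ s, 0 ≤ s → ∀ x,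
      |iteratedDeriv n (psiSig s) x| ≤ C * s ^ n ∧
        (3 ≤ |x| → |iteratedDeriv n (psiSig s) x| ≤ C * s ^ n * Real.exp (-s)) := by
  choose C₁ hC₁ using exists_abs_iteratedDeriv_psiSig_le
  choose C₂ hC₂ using exists_abs_iteratedDeriv_psiSig_le_of_three_le_abs
  obtain ⟨M, hM⟩ := ((Finset.range (k + 1)).image fun n => max (C₁ n) (C₂ n)).exists_le
  refine ⟨max M 1, by positivity, fun n hn s hs x => ?_⟩
  have hCM : max (C₁ n) (C₂ n) ≤ max M 1 :=
    (hM _ (Finset.mem_image_of_mem _ (Finset.mem_range.2 (Nat.lt_succ_of_le hn)))).trans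
      (le_max_left _ _)
  refine ⟨(hC₁ n s hs x).trans ?_, fun hx => (hC₂ n s hs x hx).trans ?_⟩
  · gcongr; exact le_of_max_le_left hCM
  · gcongr; exact le_of_max_le_right hCM

theorem fderiv_prod_apply_single {ι : Type*} [Fintype ι] [DecidableEq ι] {g : ι → ℝ → ℝ}
    (hg : ∀ l, Differentiable ℝ (g l)) (x : ι → ℝ) (i : ι) :
    fderiv ℝ (fun y : ι → ℝ => ∏ l, g l (y l)) x (Pi.single i 1) =
      deriv (g i) (x i) * ∏ l ∈ Finset.univ.erase i, g l (x l) := by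
  have hfactor : ∀ l ∈ Finset.univ, HasFDerivAt (fun y : ι → ℝ => g l (y l))
      (deriv (g l) (x l) • ContinuousLinearMap.proj l) x :=
    fun l _ => (hg l (x l)).hasDerivAt.comp_hasFDerivAt x
      (ContinuousLinearMap.proj (R := ℝ) (φ := fun _ : ι => ℝ) l).hasFDerivAt
  rw [(HasFDerivAt.finsetProd hfactor).fderiv]
  simp [Pi.single_apply, mul_comm]

theorem multiDeriv_prod_apply {d : ℕ} {f : Fin d → ℝ → ℝ} (hf : ∀ l, ContDiff ℝ ∞ (f l))
    (u : List (Fin d)) :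
    multiDeriv u (fun x => ∏ l, f l (x l)) =
      fun x => ∏ l, iteratedDeriv (u.count l) (f l) (x l) := by
  induction u with
  | nil => simp [multiDeriv]
  | cons i u ih =>
    ext x
    have hdiff : ∀ l, Differentiable ℝ (iteratedDeriv (u.count l) (f l)) := fun l =>
      (hf l).differentiable_iteratedDeriv _ (by exact_mod_cast WithTop.coe_lt_top _)
    rw [multiDeriv, ih]
    dsimp only
    rw [fderiv_prod_apply_single hdiff, ← Finset.mul_prod_erase _ _ (Finset.mem_univ i),
      List.count_cons_self, iteratedDeriv_succ]
    congr 1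
    refine Finset.prod_congr rfl fun l hl => ?_
    rw [List.count_cons_of_ne (Finset.ne_of_mem_erase hl).symm]

theorem List.sum_count_eq_length {α : Type*} [Fintype α] [DecidableEq α] (u : List α) :
    ∑ a, u.count a = u.length := by
  simpa using Multiset.sum_count_eq_card (s := Finset.univ) (m := (u : Multiset α)) (by simp)

theorem List.prod_mul_pow_count {α M : Type*} [Fintype α] [DecidableEq α] [CommMonoid M]
    (u : List α) (c a : M) :
    ∏ l, c * a ^ u.count l = c ^ Fintype.card α * a ^ u.length := by
  rw [Finset.prod_mul_distrib, Finset.prod_const, Finset.card_univ, Finset.prod_pow_eq_pow_sum,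
    List.sum_count_eq_length]

theorem abs_prod_le_prod_mul {ι R : Type*} [Fintype ι] [DecidableEq ι] [CommRing R]
    [LinearOrder R] [IsStrictOrderedRing R] {f g : ι → R} {ε : R} (i : ι) (hf : ∀ l, |f l| ≤ g l)
    (hi : |f i| ≤ g i * ε) : |∏ l, f l| ≤ (∏ l, g l) * ε := by
  rw [← Finset.mul_prod_erase _ f (Finset.mem_univ i),
    ← Finset.mul_prod_erase _ g (Finset.mem_univ i), abs_mul, Finset.abs_prod, mul_right_comm]
  exact mul_le_mul hi (Finset.prod_le_prod (fun _ _ => abs_nonneg _) fun l _ => hf l)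
    (Finset.prod_nonneg fun _ _ => abs_nonneg _) ((abs_nonneg _).trans hi)

theorem abs_pow_mul_le_mul_pow_mul {R : Type*} [CommRing R] [LinearOrder R]
    [IsStrictOrderedRing R] {a b c s r : R} {n : ℕ} (ha : 0 ≤ a) (h : |b| ≤ c * s ^ n * r) :
    |a ^ n * b| ≤ c * (a * s) ^ n * r := by
  rw [abs_mul, abs_pow, abs_of_nonneg ha, mul_pow]
  calc _ ≤ a ^ n * (c * s ^ n * r) := by gcongr
    _ = _ := by ring

theorem abs_pow_mul_le_mul_pow {R : Type*} [CommRing R] [LinearOrder R]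
    [IsStrictOrderedRing R] {a b c s : R} {n : ℕ} (ha : 0 ≤ a) (h : |b| ≤ c * s ^ n) :
    |a ^ n * b| ≤ c * (a * s) ^ n := by
  simpa using abs_pow_mul_le_mul_pow_mul (r := 1) ha (by simpa using h)

theorem multiDeriv_bump (d N : ℕ) (s : ℝ) (m : Fin d → ℕ) (u : List (Fin d))
    (x : Fin d → ℝ) :
    multiDeriv u (bump d N s m) x = ∏ l, (3 * (N : ℝ)) ^ u.count l *
      iteratedDeriv (u.count l) (psiSig s) (3 * N * (x l - m l / N)) := by
  have hsmooth : ∀ l : Fin d, ContDiff ℝ ∞ fun t => psiSig s (3 * N * (t - m l / N)) :=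
    fun l => (contDiff_psiSig s).comp (by fun_prop)
  unfold bump
  rw [multiDeriv_prod_apply hsmooth]
  simp only [iteratedDeriv_comp_mul_sub ((contDiff_psiSig s).of_le (mod_cast le_top))]

theorem bump_decay_outside_patch_general (d : ℕ) (k : ℕ) :
    ∃ C : ℝ, 0 < C ∧
      ∀ N : ℕ, 1 ≤ N → ∀ s : ℝ, 1 ≤ s → ∀ m : Fin d → ℕ, (∀ l, m l ≤ N) →
        ∀ u : List (Fin d), u.length ≤ k →
        ∀ x : Fin d → ℝ, (∃ i, 1 / (N : ℝ) ≤ |x i - (m i : ℝ) / (N : ℝ)|) →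
          |multiDeriv u (bump d N s m) x| ≤
            C * (N : ℝ) ^ k * s ^ k * Real.exp (-s) := by
  obtain ⟨C, hC0, hC⟩ := exists_uniform_abs_iteratedDeriv_psiSig_le k
  refine ⟨3 ^ k * C ^ d, by positivity, fun N hN s hs m _ u hu x ⟨i, hi⟩ => ?_⟩
  have hN : (1 : ℝ) ≤ N := by exact_mod_cast hN
  have hN3 : (0 : ℝ) ≤ 3 * N := by positivity
  have hs0 : 0 ≤ s := zero_le_one.trans hs
  set y : Fin d → ℝ := fun l => 3 * N * (x l - m l / N)
  have hcount : ∀ l, u.count l ≤ k := fun l => List.count_le_length.trans hu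
  have hpatch : 3 ≤ |y i| := by
    rw [abs_mul, abs_of_pos (by positivity : (0 : ℝ) < 3 * N)]
    calc (3 : ℝ) = 3 * N * (1 / N) := by field_simp
      _ ≤ _ := by gcongr
  rw [multiDeriv_bump]
  calc _ ≤ (∏ l, C * (3 * N * s) ^ u.count l) * Real.exp (-s) :=
        abs_prod_le_prod_mul i
          (fun l => abs_pow_mul_le_mul_pow hN3 (hC _ (hcount l) s hs0 _).1)
          (abs_pow_mul_le_mul_pow_mul hN3 ((hC _ (hcount i) s hs0 _).2 hpatch))
    _ = C ^ d * (3 * N * s) ^ u.length * Real.exp (-s) := by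
        rw [List.prod_mul_pow_count, Fintype.card_fin]
    _ ≤ C ^ d * (3 * N * s) ^ k * Real.exp (-s) := by
        gcongr
        exact one_le_mul_of_one_le_of_one_le (by linarith) hs
    _ = 3 ^ k * C ^ d * N ^ k * s ^ k * Real.exp (-s) := by ring

/-- Exponential decay of the sigmoid bump functions outside their patch:
for every `d` and `k` there is `C = C(k,d) > 0` such that for all `N ≥ 1`, `s ≥ 1`,
`m ∈ {0,…,N}^d`, every multi-index `α` with `|α| ≤ k` and every `x` with
`‖x - m/N‖_∞ ≥ 1/N`, `|D^α φ^s_m(x)| ≤ C N^k s^k e^{-s}`. -/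
theorem bump_decay_outside_patch (d : ℕ) (hd : 0 < d) (k : ℕ) :
    ∃ C : ℝ, 0 < C ∧
      ∀ N : ℕ, 1 ≤ N → ∀ s : ℝ, 1 ≤ s → ∀ m : Fin d → ℕ, (∀ l, m l ≤ N) →
        ∀ u : List (Fin d), u.length ≤ k →
        ∀ x : Fin d → ℝ, (∃ i, 1 / (N : ℝ) ≤ |x i - (m i : ℝ) / (N : ℝ)|) →
          |multiDeriv u (bump d N s m) x| ≤
            C * (N : ℝ) ^ k * s ^ k * Real.exp (-s) :=
  bump_decay_outside_patch_general d k
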